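/- arXiv:1512.07716 — 2 statements merged into one kernel-verified Lean document; each statement's English description precedes it below -/
import Mathlib

section
/- For any real number u, exp(-2·max(0, 1-u)) = ∫₀^∞ (1/√(2πγ)) · exp(-(1+γ-u)²/(2γ)) dγ. -/
open MeasureTheory Real Set

/-!
Substituting `γ = t ^ 2`, the integrand becomes `2 / √(2π) · exp (-2 max 0 (1 - u))` times
`exp (-(t - |1 - u| / t) ^ 2 / 2)`. By the Cauchy–Schlömilch transformation,
`∫ t in Ioi 0, f (t - c / t) = (∫ x, f x) / 2` for even integrable `f` and `c ≥ 0`: the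
substitution `t ↦ c / t` shows that the weights `1` and `c / t ^ 2` give the same integral, and
their sum `1 + c / t ^ 2` is the Jacobian of `t ↦ t - c / t`, a bijection `(0, ∞) → ℝ`. The
remaining integral is thus half the Gaussian integral `√(2π)`.
-/

section CauchySchlomilch

variable {c : ℝ}

theorem strictMonoOn_sub_div_Ioi (hc : 0 < c) : StrictMonoOn (fun t : ℝ => t - c / t) (Ioi 0) :=
  fun a ha b _ hab => by
    have : c / b < c / a := div_lt_div_of_pos_left hc ha hab
    simp only
    linarith

theorem image_sub_div_Ioi (hc : 0 < c) : (fun t : ℝ => t - c / t) '' Ioi 0 = univ := by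
  refine eq_univ_of_forall fun s => ?_
  -- the positive root of `t ^ 2 - s * t - c = 0`
  set r := √(s ^ 2 + 4 * c)
  have hr : r ^ 2 = s ^ 2 + 4 * c := sq_sqrt (by positivity)
  have hsr : |s| < r := by
    rw [← sqrt_sq_eq_abs]
    exact sqrt_lt_sqrt (sq_nonneg s) (by linarith)
  have ht : 0 < (s + r) / 2 := by linarith [neg_abs_le s]
  refine ⟨(s + r) / 2, ht, ?_⟩
  have : c / ((s + r) / 2) = (r - s) / 2 := by
    rw [div_eq_iff ht.ne']
    nlinarith
  simp only [this]
  ring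

theorem image_const_div_Ioi (hc : 0 < c) : (fun t : ℝ => c / t) '' Ioi 0 = Ioi 0 :=
  Subset.antisymm (image_subset_iff.2 fun _ ht => div_pos hc ht)
    fun x hx => ⟨c / x, div_pos hc hx, div_div_cancel₀ hc.ne'⟩

theorem hasDerivAt_sub_div {t : ℝ} (ht : t ≠ 0) :
    HasDerivAt (fun t : ℝ => t - c / t) (1 + c / t ^ 2) t := by
  exact ((hasDerivAt_id' t).sub ((hasDerivAt_const t c).div (hasDerivAt_id' t) ht)).congr_deriv
    (by ring)

theorem hasDerivAt_const_div {t : ℝ} (ht : t ≠ 0) :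
    HasDerivAt (fun t : ℝ => c / t) (-(c / t ^ 2)) t := by
  exact ((hasDerivAt_const t c).div (hasDerivAt_id' t) ht).congr_deriv (by ring)

theorem integral_Ioi_comp_sub_div_of_pos {f : ℝ → ℝ} (hf : Integrable f) (heven : f.Even)
    (hc : 0 < c) : ∫ t in Ioi 0, f (t - c / t) = (∫ x, f x) / 2 := by
  have hw : ∀ t : ℝ, 0 < 1 + c / t ^ 2 := fun t => by positivity
  have hφ' : ∀ t ∈ Ioi (0 : ℝ), HasDerivWithinAt (fun t => t - c / t) (1 + c / t ^ 2) (Ioi 0) t :=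
    fun t ht => (hasDerivAt_sub_div (ne_of_gt ht)).hasDerivWithinAt
  have hψ' : ∀ t ∈ Ioi (0 : ℝ), HasDerivWithinAt (fun t => c / t) (-(c / t ^ 2)) (Ioi 0) t :=
    fun t ht => (hasDerivAt_const_div (ne_of_gt ht)).hasDerivWithinAt
  have hφinj := (strictMonoOn_sub_div_Ioi hc).injOn
  have hψinj : InjOn (fun t : ℝ => c / t) (Ioi 0) :=
    (Function.LeftInverse.injective (g := fun t => c / t) fun _ => div_div_cancel₀ hc.ne').injOn
  have hweighted : ∫ t in Ioi 0, (1 + c / t ^ 2) * f (t - c / t) = ∫ x, f x := by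
    have := integral_image_eq_integral_abs_deriv_smul measurableSet_Ioi hφ' hφinj f
    rw [image_sub_div_Ioi hc, Measure.restrict_univ] at this
    simp_rw [this, abs_of_pos (hw _), smul_eq_mul]
  have hweighted_int : IntegrableOn (fun t => (1 + c / t ^ 2) * f (t - c / t)) (Ioi 0) := by
    have := (integrableOn_image_iff_integrableOn_abs_deriv_smul measurableSet_Ioi hφ' hφinj f).1
      (by rw [image_sub_div_Ioi hc]; exact hf.integrableOn)
    simpa only [abs_of_pos (hw _), smul_eq_mul] using this
  have hint : IntegrableOn (fun t => f (t - c / t)) (Ioi 0) := by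
    refine IntegrableOn.congr_fun
      (hweighted_int.bdd_mul (c := 1) (f := fun t => (1 + c / t ^ 2)⁻¹) ?_ ?_)
      (fun t _ => inv_mul_cancel_left₀ (hw t).ne' _) measurableSet_Ioi
    · exact (by fun_prop : Measurable fun t : ℝ => (1 + c / t ^ 2)⁻¹).aestronglyMeasurable
    · refine Filter.Eventually.of_forall fun t => ?_
      rw [norm_inv, Real.norm_of_nonneg (hw t).le]
      exact inv_le_one_of_one_le₀ (le_add_of_nonneg_right (by positivity))
  -- `t ↦ c / t` swaps `t - c / t` with its negative
  have hinv : ∫ t in Ioi 0, c / t ^ 2 * f (t - c / t) = ∫ t in Ioi 0, f (t - c / t) := by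
    have := integral_image_eq_integral_abs_deriv_smul measurableSet_Ioi hψ' hψinj
      fun t => f (t - c / t)
    rw [image_const_div_Ioi hc] at this
    rw [this]
    refine setIntegral_congr_fun measurableSet_Ioi fun t ht => ?_
    rw [smul_eq_mul, abs_neg, abs_of_pos (by have : 0 < t := ht; positivity),
      div_div_cancel₀ hc.ne', ← neg_sub, heven]
  have hsplit : ∫ t in Ioi 0, (1 + c / t ^ 2) * f (t - c / t)
      = (∫ t in Ioi 0, f (t - c / t)) + ∫ t in Ioi 0, c / t ^ 2 * f (t - c / t) := by
    rw [← integral_add hint ((hweighted_int.sub hint).congr_fun (fun t _ => by simp only [Pi.sub_apply]; ring)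
      measurableSet_Ioi)]
    simp_rw [add_mul, one_mul]
  linarith

theorem integral_Ioi_comp_sub_div {f : ℝ → ℝ} (hf : Integrable f) (heven : f.Even)
    (hc : 0 ≤ c) : ∫ t in Ioi 0, f (t - c / t) = (∫ x, f x) / 2 := by
  rcases hc.eq_or_lt with rfl | hc
  · have habs : (fun x => f |x|) = f := funext fun x => by
      rcases abs_choice x with h | h <;> rw [h]
      exact heven x
    have := integral_comp_abs (f := f)
    rw [habs] at this
    simp only [zero_div, sub_zero]
    linarith
  · exact integral_Ioi_comp_sub_div_of_pos hf heven hc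

end CauchySchlomilch

theorem integral_Ioi_exp_neg_sub_div_sq {c : ℝ} (hc : 0 ≤ c) :
    ∫ t in Ioi 0, exp (-(1 / 2) * (t - c / t) ^ 2) = √(2 * π) / 2 := by
  rw [integral_Ioi_comp_sub_div (integrable_exp_neg_mul_sq (by norm_num)) (fun x => by simp) hc,
    integral_gaussian]
  norm_num [div_div_eq_mul_div, mul_comm]

theorem neg_add_sq_sq_div_eq_neg_two_mul_max {a t : ℝ} (ht : t ≠ 0) :
    -(a + t ^ 2) ^ 2 / (2 * t ^ 2) = -2 * max 0 a + -(1 / 2) * (t - |a| / t) ^ 2 := by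
  rcases le_total a 0 with ha | ha
  · rw [max_eq_left ha, abs_of_nonpos ha]
    field_simp
    ring
  · rw [max_eq_right ha, abs_of_nonneg ha]
    field_simp
    ring

theorem hinge_scale_mixture (u : ℝ) :
    Real.exp (-2 * max 0 (1 - u)) =
      ∫ γ in Set.Ioi (0:ℝ),
        (1 / Real.sqrt (2 * Real.pi * γ)) *
          Real.exp (-(1 + γ - u)^2 / (2 * γ)) := by
  symm
  calc _ = ∫ t in Ioi (0 : ℝ), (2 * t ^ ((2 : ℝ) - 1)) • ((1 / √(2 * π * t ^ (2 : ℝ))) *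
          exp (-(1 + t ^ (2 : ℝ) - u) ^ 2 / (2 * t ^ (2 : ℝ)))) :=
        (integral_comp_rpow_Ioi_of_pos two_pos).symm
    _ = ∫ t in Ioi (0 : ℝ), 2 / √(2 * π) * exp (-2 * max 0 (1 - u)) *
          exp (-(1 / 2) * (t - |1 - u| / t) ^ 2) := by
        refine setIntegral_congr_fun measurableSet_Ioi fun t (ht : 0 < t) => ?_
        rw [show (2 : ℝ) - 1 = 1 by norm_num, rpow_one, rpow_two, smul_eq_mul,
          sqrt_mul (by positivity), sqrt_sq ht.le, show 1 + t ^ 2 - u = 1 - u + t ^ 2 by ring,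
          neg_add_sq_sq_div_eq_neg_two_mul_max ht.ne', exp_add]
        field_simp
    _ = exp (-2 * max 0 (1 - u)) := by
        rw [integral_const_mul, integral_Ioi_exp_neg_sub_div_sq (abs_nonneg _)]
        field_simp
end

section
/- Let λ > 0 and data x_d ∈ ℝ^K, y_d ∈ {1,-1}. Any minimizer w* of F(w) = (λ/2)‖w‖² + 2∑_d max(0, 1 - y_d⟨w,x_d⟩) lies in the linear span of {x₁,…,x_D}. -/
open RealInnerProductSpace

namespace Submodule

variable {E : Type*} [NormedAddCommGroup E] [InnerProductSpace ℝ E]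

theorem inner_starProjection_eq_of_mem (K : Submodule ℝ E) [K.HasOrthogonalProjection]
    (w : E) {v : E} (hv : v ∈ K) : ⟪K.starProjection w, v⟫ = ⟪w, v⟫ := by
  rw [inner_starProjection_left_eq_right, starProjection_eq_self_iff.mpr hv]

theorem norm_starProjection_lt_of_notMem (K : Submodule ℝ E) [K.HasOrthogonalProjection]
    {w : E} (hw : w ∉ K) : ‖K.starProjection w‖ < ‖w‖ :=
  (norm_starProjection_apply_le K w).lt_of_ne fun h => hw ((mem_iff_norm_starProjection K w).mpr h)

/-- Representer theorem: projecting a minimizer onto the span leaves the loss unchanged and would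
strictly decrease the regularizer if the minimizer were outside the span. -/
theorem mem_span_range_of_isMinOn_regularized {ι : Type*} [Finite ι] (x : ι → E)
    (g : ℝ → ℝ) (hg : StrictMonoOn g (Set.Ici 0)) (L : (ι → ℝ) → ℝ) {w : E}
    (hmin : IsMinOn (fun v => g ‖v‖ + L (fun d => ⟪v, x d⟫)) Set.univ w) :
    w ∈ span ℝ (Set.range x) := by
  set K := span ℝ (Set.range x)
  have : FiniteDimensional ℝ K := FiniteDimensional.span_of_finite ℝ (Set.finite_range x)
  by_contra hw
  have hinner : (fun d => ⟪K.starProjection w, x d⟫) = fun d => ⟪w, x d⟫ :=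
    funext fun d => K.inner_starProjection_eq_of_mem w (subset_span ⟨d, rfl⟩)
  have hg_lt : g ‖K.starProjection w‖ < g ‖w‖ :=
    hg (norm_nonneg _) (norm_nonneg _) (K.norm_starProjection_lt_of_notMem hw)
  have hle := isMinOn_univ_iff.mp hmin (K.starProjection w)
  rw [hinner] at hle
  linarith

end Submodule

theorem svm_representer_general (K D : ℕ) (lam : ℝ) (hlam : 0 < lam)
    (x : Fin D → EuclideanSpace ℝ (Fin K)) (y : Fin D → ℝ)
    (F : EuclideanSpace ℝ (Fin K) → ℝ)
    (hF : ∀ w, F w = lam / 2 * ‖w‖^2 + 2 * ∑ d, max 0 (1 - y d * ⟪w, x d⟫))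
    (wstar : EuclideanSpace ℝ (Fin K))
    (hmin : ∀ w, F wstar ≤ F w) :
    wstar ∈ Submodule.span ℝ (Set.range x) := by
  have hreg : StrictMonoOn (fun t : ℝ => lam / 2 * t ^ 2) (Set.Ici 0) := fun s hs t _ hst =>
    mul_lt_mul_of_pos_left (pow_lt_pow_left₀ hst hs two_ne_zero) (half_pos hlam)
  refine Submodule.mem_span_range_of_isMinOn_regularized x _ hreg
    (fun v => 2 * ∑ d, max 0 (1 - y d * v d)) (isMinOn_univ_iff.mpr fun w => ?_)
  simpa only [hF] using hmin w

theorem svm_representer (K D : ℕ) (lam : ℝ) (hlam : 0 < lam)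
    (x : Fin D → EuclideanSpace ℝ (Fin K)) (y : Fin D → ℝ)
    (hy : ∀ d, y d = 1 ∨ y d = -1)
    (F : EuclideanSpace ℝ (Fin K) → ℝ)
    (hF : ∀ w, F w = lam / 2 * ‖w‖^2 + 2 * ∑ d, max 0 (1 - y d * ⟪w, x d⟫))
    (wstar : EuclideanSpace ℝ (Fin K))
    (hmin : ∀ w, F wstar ≤ F w) :
    wstar ∈ Submodule.span ℝ (Set.range x) :=
  svm_representer_general K D lam hlam x y F hF wstar hmin
end
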